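/- Every graded monomial identity of BT(d_1,…,d_m;F) follows from one of degree at most 2n − 2; that is, every graded monomial identity of BT(d_1,…,d_m;F) lies in the T_{Z_n}-ideal generated by the graded monomial identities of BT(d_1,…,d_m;F) of degree at most 2n − 2. -/

import Mathlib

open scoped BigOperators

/-- The free associative algebra on variables indexed by pairs (degree in `ZMod n`, index). -/
abbrev FA (F : Type*) [Field F] (n : ℕ) := FreeAlgebra F (ZMod n × ℕ)

/-- The graded monomial corresponding to a word of variables. -/
def mono (F : Type*) [Field F] (n : ℕ) (w : List (ZMod n × ℕ)) : FA F n :=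
  (w.map fun p => FreeAlgebra.ι F p).prod

/-- The homogeneous component of degree `g` of the free graded algebra. -/
def homComp (F : Type*) [Field F] (n : ℕ) (g : ZMod n) : Submodule F (FA F n) :=
  Submodule.span F
    {x | ∃ w : List (ZMod n × ℕ), (w.map Prod.fst).sum = g ∧ x = mono F n w}

/-- A `T_{Z_n}`-ideal: invariant under all graded endomorphisms. -/
def IsTIdeal (F : Type*) [Field F] (n : ℕ) (I : Ideal (FA F n)) : Prop :=
  ∀ φ : FA F n →ₐ[F] FA F n,
    (∀ g : ZMod n, ∀ x ∈ homComp F n g, φ x ∈ homComp F n g) →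
    ∀ x ∈ I, φ x ∈ I

/-- The `T_{Z_n}`-ideal generated by a set of graded polynomials. -/
def TIdealGen (F : Type*) [Field F] (n : ℕ) (S : Set (FA F n)) : Ideal (FA F n) :=
  sInf {I : Ideal (FA F n) | IsTIdeal F n I ∧ S ⊆ I}

/-- The Vasilovsky polynomials. -/
def vasSet (F : Type*) [Field F] (n : ℕ) : Set (FA F n) :=
  {f | ∃ r s : ℕ,
      f = FreeAlgebra.ι F ((0 : ZMod n), r) * FreeAlgebra.ι F ((0 : ZMod n), s)
        - FreeAlgebra.ι F ((0 : ZMod n), s) * FreeAlgebra.ι F ((0 : ZMod n), r)} ∪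
  {f | ∃ (g : ZMod n) (r s t : ℕ),
      f = FreeAlgebra.ι F (g, r) * FreeAlgebra.ι F (-g, s) * FreeAlgebra.ι F (g, t)
        - FreeAlgebra.ι F (g, t) * FreeAlgebra.ι F (-g, s) * FreeAlgebra.ι F (g, r)}

/-- `I_n`, the `T_{Z_n}`-ideal generated by the Vasilovsky identities. -/
def In' (F : Type*) [Field F] (n : ℕ) : Ideal (FA F n) := TIdealGen F n (vasSet F n)

/-- `f` is a graded identity of the algebra `B` with `ZMod n`-grading `gr`. -/
def IsGIdentity (F : Type*) [Field F] (n : ℕ) {B : Type*} [Ring B] [Algebra F B]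
    (gr : ZMod n → Set B) (f : FA F n) : Prop :=
  ∀ σ : ZMod n × ℕ → B, (∀ p : ZMod n × ℕ, σ p ∈ gr p.1) →
    FreeAlgebra.lift F σ f = 0

/-- The ideal of graded identities. -/
def TIdOf (F : Type*) [Field F] (n : ℕ) {B : Type*} [Ring B] [Algebra F B]
    (gr : ZMod n → Set B) : Ideal (FA F n) where
  carrier := {f | IsGIdentity F n gr f}
  zero_mem' := fun σ _ => map_zero _
  add_mem' := fun ha hb σ hσ => by
    rw [map_add, ha σ hσ, hb σ hσ, add_zero]
  smul_mem' := fun c a ha σ hσ => by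
    rw [smul_eq_mul, map_mul, ha σ hσ, mul_zero]

/-- The Di Vincenzo–Vasilovsky grading of the matrix algebra. -/
def matGr (F : Type*) [Field F] (n : ℕ) (t : ZMod n) :
    Set (Matrix (ZMod n) (ZMod n) F) :=
  {A | ∀ i j : ZMod n, A i j ≠ 0 → j - i = t}

/-- The index of the block (of sizes `d 0, d 1, …`) containing row/column `i`. -/
noncomputable def blockOf (d : ℕ → ℕ) (i : ℕ) : ℕ :=
  sInf {k | i < ∑ j ∈ Finset.range (k + 1), d j}

/-- The grading of the block-triangular algebra `BT(d₀,…,d_{m-1};F)`: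
homogeneous component of degree `t`. -/
def BTgr (F : Type*) [Field F] (n : ℕ) (d : ℕ → ℕ) (t : ZMod n) :
    Set (Matrix (ZMod n) (ZMod n) F) :=
  {A | ∀ i j : ZMod n, A i j ≠ 0 → j - i = t ∧ blockOf d i.val ≤ blockOf d j.val}

/-- Number of zero rows of a matrix. -/
noncomputable def fRows {R : Type*} [Zero R] {n : ℕ} (A : Matrix (ZMod n) (ZMod n) R) : ℕ :=
  Nat.card {i : ZMod n // A i = 0}

/-- Number of falls between `A` and `B`. -/
noncomputable def falls {R : Type*} [CommRing R] {n : ℕ} [NeZero n]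
    (A B : Matrix (ZMod n) (ZMod n) R) : ℕ :=
  fRows (A * B) - fRows A

/-- The generic matrix `G_r^{(g)}` of `BT(d;F)`. -/
noncomputable def genBT (F : Type*) [Field F] (n : ℕ) (d : ℕ → ℕ) (g : ZMod n) (r : ℕ) :
    Matrix (ZMod n) (ZMod n) (MvPolynomial ((ZMod n × ZMod n) × ℕ) F) :=
  Matrix.of fun p q =>
    if q - p = g ∧ blockOf d p.val ≤ blockOf d q.val
    then MvPolynomial.X ((p, q), r) else 0

/-- The grading of `BT(n-1,1;F)`: homogeneous component of degree `t`. -/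
def BT1gr (F : Type*) [Field F] (n : ℕ) (t : ZMod n) :
    Set (Matrix (ZMod n) (ZMod n) F) :=
  {A | (∀ i j : ZMod n, A i j ≠ 0 → j - i = t) ∧
       ∀ j : ZMod n, j.val < n - 1 → A ((n - 1 : ℕ) : ZMod n) j = 0}

/-- The matrix `Σ_{i=1}^{n-1} e_{i,i+g}` used in the canonical substitution. -/
def subMat (F : Type*) [Field F] (n : ℕ) (g : ZMod n) :
    Matrix (ZMod n) (ZMod n) F :=
  Matrix.of fun p q => if p ≠ ((n - 1 : ℕ) : ZMod n) ∧ q = p + g then 1 else 0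


/-! ### Auxiliary machinery -/

section AuxMachinery

open Finset

variable {F : Type*} [Field F] [CharZero F] {n : ℕ} [NeZero n] {d : ℕ → ℕ}

/-- Partial sums of degrees of a word. -/
def psum {F : Type*} [Field F] {n : ℕ} (w : List (ZMod n × ℕ)) (j : ℕ) : ZMod n :=
  ((w.take j).map Prod.fst).sum

lemma psum_zero {w : List (ZMod n × ℕ)} : psum (F := F) w 0 = 0 := by
  simp [psum]

lemma psum_cons {pr : ZMod n × ℕ} {v : List (ZMod n × ℕ)} {j : ℕ} :
    psum (F := F) (pr :: v) (j + 1) = pr.1 + psum (F := F) v j := by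
  simp [psum]

lemma mono_append (a b : List (ZMod n × ℕ)) :
    mono F n (a ++ b) = mono F n a * mono F n b := by
  simp [mono]

lemma mono_cons (pr : ZMod n × ℕ) (v : List (ZMod n × ℕ)) :
    mono F n (pr :: v) = FreeAlgebra.ι F pr * mono F n v := by
  simp [mono]

lemma lift_mono {B : Type*} [Ring B] [Algebra F B] (σ : ZMod n × ℕ → B)
    (v : List (ZMod n × ℕ)) :
    FreeAlgebra.lift F σ (mono F n v) = (v.map σ).prod := by
  rw [mono, map_list_prod, List.map_map]
  congr 1
  apply List.map_congr_left
  intro a _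
  simp

/-- Core induction for Step B: nonzero entries of products of homogeneous
block-triangular matrices force a block-nondecreasing chain. -/
lemma prod_entry_chain (σ : ZMod n × ℕ → Matrix (ZMod n) (ZMod n) F)
    (hσ : ∀ pr, σ pr ∈ BTgr F n d pr.1) :
    ∀ (v : List (ZMod n × ℕ)) (x y : ZMod n), ((v.map σ).prod) x y ≠ 0 →
      ∀ j, j < v.length →
        blockOf d ((x + psum (F := F) v j)).val ≤ blockOf d ((x + psum (F := F) v (j+1))).val := by
  intro v
  induction v with
  | nil => intro x y h j hj; simp at hj
  | cons pr tl ih =>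
    intro x y h j hj
    rw [List.map_cons, List.prod_cons, Matrix.mul_apply] at h
    obtain ⟨z, _, hz⟩ := Finset.exists_ne_zero_of_sum_ne_zero h
    rw [mul_ne_zero_iff] at hz
    obtain ⟨h1, h2⟩ := hz
    obtain ⟨hz1, hz2⟩ := hσ pr x z h1
    have hzx : z = x + pr.1 := by
      have : z - x + x = pr.1 + x := by rw [hz1]
      rwa [sub_add_cancel, add_comm] at this
    match j with
    | 0 =>
      have e0 : x + psum (F := F) (pr :: tl) 0 = x := by rw [psum_zero, add_zero]
      have e1 : x + psum (F := F) (pr :: tl) 1 = z := by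
        rw [show (1 : ℕ) = 0 + 1 from rfl, psum_cons, psum_zero, add_zero, hzx]
      rw [e0, e1]
      exact hz2
    | (jj + 1) =>
      have hjj : jj < tl.length := by simpa using hj
      have := ih (x + pr.1) y (by rwa [hzx] at h2) jj hjj
      have ea : x + pr.1 + psum (F := F) tl jj = x + psum (F := F) (pr :: tl) (jj + 1) := by
        rw [psum_cons, add_assoc]
      have eb : x + pr.1 + psum (F := F) tl (jj + 1) = x + psum (F := F) (pr :: tl) (jj + 2) := by
        rw [show jj + 2 = (jj + 1) + 1 from rfl, psum_cons, add_assoc]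
      rwa [ea, eb] at this

/-- Step B: a word whose partial-sum chain always has a block descent (for every
starting point) is a graded identity of the block-triangular algebra. -/
lemma stepB (u : List (ZMod n × ℕ))
    (hch : ∀ x : ZMod n, ∃ j, j < u.length ∧
      blockOf d ((x + psum (F := F) u (j+1))).val < blockOf d ((x + psum (F := F) u j)).val) :
    IsGIdentity F n (BTgr F n d) (mono F n u) := by
  intro σ hσ
  rw [lift_mono]
  apply Matrix.ext
  intro x y
  rw [Matrix.zero_apply]
  by_contra hne
  obtain ⟨j, hj, hlt⟩ := hch x
  exact absurd (prod_entry_chain σ hσ u x y hne j hj) (not_le.mpr hlt)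

/-- The 0/1 matrix over ℕ spanning a homogeneous component of the
block-triangular algebra. -/
noncomputable def fmN (n : ℕ) [NeZero n] (d : ℕ → ℕ) (g : ZMod n) :
    Matrix (ZMod n) (ZMod n) ℕ :=
  Matrix.of fun x z => if z - x = g ∧ blockOf d x.val ≤ blockOf d z.val then 1 else 0

lemma fmN_prod_pos :
    ∀ (v : List (ZMod n × ℕ)) (x : ZMod n),
      (∀ j, j < v.length →
        blockOf d ((x + psum (F := F) v j)).val ≤ blockOf d ((x + psum (F := F) v (j+1))).val) →
      1 ≤ ((v.map (fun pr => fmN n d pr.1)).prod) x (x + psum (F := F) v v.length) := by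
  intro v
  induction v with
  | nil =>
    intro x _
    have : psum (F := F) ([] : List (ZMod n × ℕ)) ([] : List (ZMod n × ℕ)).length = 0 :=
      psum_zero
    rw [List.map_nil, List.prod_nil, this, add_zero, Matrix.one_apply_eq]
  | cons pr tl ih =>
    intro x hchain
    rw [List.map_cons, List.prod_cons, Matrix.mul_apply]
    have h0 : fmN n d pr.1 x (x + pr.1) = 1 := by
      have hc2 : blockOf d x.val ≤ blockOf d ((x + pr.1)).val := by
        have := hchain 0 (by simp)
        rw [psum_zero, add_zero] at this
        have e1 : x + psum (F := F) (pr :: tl) 1 = x + pr.1 := by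
          rw [show (1:ℕ) = 0 + 1 from rfl, psum_cons, psum_zero, add_zero]
        rwa [e1] at this
      simp only [fmN, Matrix.of_apply, add_sub_cancel_left, true_and]
      rw [if_pos hc2]
    have htl : 1 ≤ ((tl.map (fun pr => fmN n d pr.1)).prod) (x + pr.1)
        (x + pr.1 + psum (F := F) tl tl.length) := by
      apply ih (x + pr.1)
      intro j hj
      have := hchain (j+1) (by simpa using hj)
      have ea : x + psum (F := F) (pr :: tl) (j + 1) = x + pr.1 + psum (F := F) tl j := by
        rw [psum_cons, add_assoc]
      have eb : x + psum (F := F) (pr :: tl) (j + 2) = x + pr.1 + psum (F := F) tl (j+1) := by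
        rw [show j + 2 = (j + 1) + 1 from rfl, psum_cons, add_assoc]
      rwa [ea, eb] at this
    have hterm : 1 ≤ fmN n d pr.1 x (x + pr.1) *
        ((tl.map (fun pr => fmN n d pr.1)).prod) (x + pr.1)
          (x + psum (F := F) (pr :: tl) (pr :: tl).length) := by
      have e : x + psum (F := F) (pr :: tl) (pr :: tl).length
          = x + pr.1 + psum (F := F) tl tl.length := by
        rw [List.length_cons, psum_cons, add_assoc]
      rw [h0, one_mul, e]
      exact htl
    calc (1:ℕ) ≤ _ := hterm
      _ ≤ _ := Finset.single_le_sum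
          (f := fun z => fmN n d pr.1 x z * ((tl.map (fun pr => fmN n d pr.1)).prod) z
            (x + psum (F := F) (pr :: tl) (pr :: tl).length))
          (fun i _ => Nat.zero_le _) (Finset.mem_univ (x + pr.1))

lemma cast_prod : ∀ (l : List (Matrix (ZMod n) (ZMod n) ℕ)),
    (l.map (fun M => M.map (Nat.cast : ℕ → F))).prod = (l.prod).map (Nat.cast : ℕ → F) := by
  intro l
  induction l with
  | nil =>
    rw [List.map_nil, List.prod_nil, List.prod_nil]
    exact (Matrix.map_one _ Nat.cast_zero Nat.cast_one).symm
  | cons M l ih =>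
    rw [List.map_cons, List.prod_cons, List.prod_cons, ih]
    apply Matrix.ext
    intro i j
    simp only [Matrix.mul_apply, Matrix.map_apply]
    rw [Nat.cast_sum]
    apply Finset.sum_congr rfl
    intro z _
    rw [Nat.cast_mul]

/-- Step A: a graded monomial identity forces, for every starting point, a strict
block descent along the word. -/
lemma stepA (w : List (ZMod n × ℕ))
    (hid : IsGIdentity F n (BTgr F n d) (mono F n w)) :
    ∀ p : ZMod n, ∃ j, j < w.length ∧
      blockOf d ((p + psum (F := F) w (j+1))).val < blockOf d ((p + psum (F := F) w j)).val := by
  by_contra hcon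
  push_neg at hcon
  obtain ⟨p, hp⟩ := hcon
  -- substitution with full homogeneous 0/1 matrices
  set σ : ZMod n × ℕ → Matrix (ZMod n) (ZMod n) F :=
    fun pr => (fmN n d pr.1).map (Nat.cast : ℕ → F) with hσdef
  have hσ : ∀ pr : ZMod n × ℕ, σ pr ∈ BTgr F n d pr.1 := by
    intro pr i j hij
    rw [hσdef] at hij
    simp only [Matrix.map_apply, fmN, Matrix.of_apply] at hij
    by_cases hc : j - i = pr.1 ∧ blockOf d i.val ≤ blockOf d j.val
    · exact hc
    · rw [if_neg hc] at hij
      exact absurd (Nat.cast_zero) hij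
  have hzero := hid σ hσ
  rw [lift_mono] at hzero
  have hmapeq : w.map σ = (w.map (fun pr => fmN n d pr.1)).map
      (fun M => M.map (Nat.cast : ℕ → F)) := by
    rw [List.map_map]; rfl
  have hcast : (w.map σ).prod = ((w.map (fun pr => fmN n d pr.1)).prod).map
      (Nat.cast : ℕ → F) := by
    rw [hmapeq]
    exact cast_prod _
  have hpos : 1 ≤ ((w.map (fun pr => fmN n d pr.1)).prod) p (p + psum (F := F) w w.length) :=
    fmN_prod_pos w p (fun j hj => hp j hj)
  have : ((w.map σ).prod) p (p + psum (F := F) w w.length) ≠ 0 := by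
    rw [hcast, Matrix.map_apply]
    exact Nat.cast_ne_zero.mpr (by omega)
  rw [hzero] at this
  exact this (Matrix.zero_apply _ _)

end AuxMachinery


section Combinatorics

open Finset

/-- If some value strictly descends along sorted indices, some adjacent pair descends. -/
lemma exists_adj_desc (f : ℕ → ℕ) (i1 i2 : ℕ) (h12 : i1 < i2) (hgt : f i2 < f i1) :
    ∃ j, i1 ≤ j ∧ j < i2 ∧ f (j+1) < f j := by
  by_contra hno
  push_neg at hno
  have key : ∀ t, i1 + t ≤ i2 → f i1 ≤ f (i1 + t) := by
    intro t
    induction t with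
    | zero => intro _; simp
    | succ s ih =>
      intro hle
      have h1 : i1 + s < i2 := by omega
      have h2 := hno (i1 + s) (by omega) h1
      have := ih (by omega)
      rw [show i1 + (s+1) = (i1 + s) + 1 by omega]
      omega
  have := key (i2 - i1) (by omega)
  rw [show i1 + (i2 - i1) = i2 by omega] at this
  omega

/-- Step C: the anchored covering-set lemma.  If every shift has an adjacent
descent and the level sums are conserved, there is a set `T` of at most `2n-1`
indices, containing `k`, which contains a strict drop pair for every shift. -/
lemma stepC {n : ℕ} [NeZero n] (hn : 2 ≤ n) (k : ℕ) (e : ZMod n → ℕ → ℕ)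
    (hcons : ∀ i j : ℕ, ∑ p : ZMod n, e p i = ∑ p : ZMod n, e p j)
    (hD : ∀ p : ZMod n, ∃ j, j < k ∧ e p (j+1) < e p j) :
    ∃ T : Finset ℕ, T.card ≤ 2*n - 1 ∧ k ∈ T ∧ (∀ x ∈ T, x ≤ k) ∧
      ∀ p : ZMod n, ∃ a ∈ T, ∃ c ∈ T, a < c ∧ e p c < e p a := by
  classical
  haveI : Fact (1 < n) := ⟨by omega⟩
  -- if some shift rises strictly, another drops strictly
  have riser : ∀ i : ℕ, ∀ q : ZMod n, e q i < e q (i+1) → ∃ r : ZMod n, e r (i+1) < e r i := by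
    intro i q h
    by_contra hc
    push_neg at hc
    have hlt : ∑ p : ZMod n, e p i < ∑ p : ZMod n, e p (i+1) :=
      Finset.sum_lt_sum (fun r _ => hc r) ⟨q, Finset.mem_univ q, h⟩
    exact absurd (hcons i (i+1)) (ne_of_lt hlt)
  -- propagate a drop-end to any later index
  have prop : ∀ j j' : ℕ, j ≤ j' → (∃ y : ZMod n, ∃ i, i < j ∧ e y j < e y i) →
      (∃ y : ZMod n, ∃ i, i < j' ∧ e y j' < e y i) := by
    intro j j' hle hj
    induction j' , hle using Nat.le_induction with
    | base => exact hj
    | succ j' hle ih =>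
      obtain ⟨y, i, hi, hlt⟩ := ih
      by_cases hc : e y (j'+1) ≤ e y j'
      · exact ⟨y, i, by omega, by omega⟩
      · obtain ⟨r, hr⟩ := riser j' y (by omega)
        exact ⟨r, j', by omega, hr⟩
  -- some shift has a drop pair ending at k
  have hyk : ∃ y : ZMod n, ∃ i, i < k ∧ e y k < e y i := by
    obtain ⟨j0, hj0, hdrop⟩ := hD 0
    exact prop (j0+1) k (by omega) ⟨0, j0, by omega, hdrop⟩
  obtain ⟨y, my, hmy, hmylt⟩ := hyk
  -- chosen adjacent descents for generic shifts
  choose fd hfdk hfdlt using hD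
  by_cases h2 : ∃ z : ZMod n, z ≠ y ∧ ∃ i, i < k ∧ e z k < e z i
  · -- two shifts drop to k
    obtain ⟨z, hzy, mz, hmz, hmzlt⟩ := h2
    refine ⟨((univ.erase y).erase z).biUnion (fun p => {fd p, fd p + 1}) ∪ {my, mz, k},
      ?_, ?_, ?_, ?_⟩
    · have h1 : (((univ.erase y).erase z).biUnion (fun p => {fd p, fd p + 1})).card ≤
          2 * ((univ.erase y).erase z).card := by
        calc _ ≤ ∑ p ∈ (univ.erase y).erase z, ({fd p, fd p + 1} : Finset ℕ).card :=
              Finset.card_biUnion_le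
          _ ≤ ∑ _p ∈ (univ.erase y).erase z, 2 := by
              apply Finset.sum_le_sum
              intro p _
              apply le_trans (Finset.card_insert_le _ _)
              simp
          _ = 2 * ((univ.erase y).erase z).card := by
              rw [Finset.sum_const, smul_eq_mul, mul_comm]
      have h2c : ((univ.erase y).erase z).card = n - 2 := by
        rw [Finset.card_erase_of_mem (Finset.mem_erase.mpr ⟨hzy, Finset.mem_univ z⟩),
          Finset.card_erase_of_mem (Finset.mem_univ y), Finset.card_univ, ZMod.card]
        omega
      have h3 : ({my, mz, k} : Finset ℕ).card ≤ 3 := by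
        apply le_trans (Finset.card_insert_le _ _)
        have := Finset.card_insert_le mz ({k} : Finset ℕ)
        simp at this ⊢
        omega
      calc _ ≤ _ := Finset.card_union_le _ _
        _ ≤ 2 * (n - 2) + 3 := by omega
        _ ≤ 2 * n - 1 := by omega
    · apply Finset.mem_union_right
      simp
    · intro x hx
      rcases Finset.mem_union.mp hx with hx | hx
      · obtain ⟨p, hp, hx⟩ := Finset.mem_biUnion.mp hx
        have := hfdk p
        simp only [Finset.mem_insert, Finset.mem_singleton] at hx
        rcases hx with rfl | rfl <;> omega
      · simp only [Finset.mem_insert, Finset.mem_singleton] at hx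
        rcases hx with rfl | rfl | rfl <;> omega
    · intro p
      by_cases hpy : p = y
      · subst hpy
        exact ⟨my, Finset.mem_union_right _ (by simp), k,
          Finset.mem_union_right _ (by simp), hmy, hmylt⟩
      · by_cases hpz : p = z
        · subst hpz
          exact ⟨mz, Finset.mem_union_right _ (by simp), k,
            Finset.mem_union_right _ (by simp), hmz, hmzlt⟩
        · have hp : p ∈ (univ.erase y).erase z :=
            Finset.mem_erase.mpr ⟨hpz, Finset.mem_erase.mpr ⟨hpy, Finset.mem_univ p⟩⟩
          exact ⟨fd p, Finset.mem_union_left _ (Finset.mem_biUnion.mpr ⟨p, hp, by simp⟩),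
            fd p + 1, Finset.mem_union_left _ (Finset.mem_biUnion.mpr ⟨p, hp, by simp⟩),
            by omega, hfdlt p⟩
  · -- single shift drops to k
    push_neg at h2
    set J := (Finset.range (k+1)).filter
      (fun j => ∃ z : ZMod n, z ≠ y ∧ ∃ i, i < j ∧ e z j < e z i) with hJdef
    have hJne : J.Nonempty := by
      obtain ⟨z, hzy⟩ := exists_ne y
      refine ⟨fd z + 1, Finset.mem_filter.mpr ⟨Finset.mem_range.mpr (by have := hfdk z; omega),
        z, hzy, fd z, by omega, hfdlt z⟩⟩
    set j1 := J.max' hJne with hj1def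
    have hj1mem := J.max'_mem hJne
    rw [Finset.mem_filter] at hj1mem
    obtain ⟨hj1r, z, hzy, mz, hmzj1, hmzlt⟩ := hj1mem
    rw [← hj1def] at hj1r hmzj1 hmzlt
    have hj1le : j1 ≤ k := by
      have := Finset.mem_range.mp hj1r
      omega
    have hj1max : ∀ j ∈ J, j ≤ j1 := fun j hj => J.le_max' j hj
    have hj1k : j1 ≠ k := by
      intro hcon
      rw [hcon] at hmzlt hmzj1
      exact absurd hmzlt (not_lt.mpr (h2 z hzy mz hmzj1))
    have hj1lt : j1 < k := by omega
    have hmem_J : ∀ (r : ZMod n) (i j : ℕ), r ≠ y → j ≤ k → i < j → e r j < e r i → j ≤ j1 := by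
      intro r i j hr hjk hij hlt
      exact hj1max j (Finset.mem_filter.mpr ⟨Finset.mem_range.mpr (by omega), r, hr, i, hij, hlt⟩)
    have hmono : ∀ p : ZMod n, p ≠ y → ∀ i, j1 ≤ i → i < k → e p i ≤ e p (i+1) := by
      intro p hp i hi hik
      by_contra hcon
      push_neg at hcon
      have := hmem_J p i (i+1) hp (by omega) (by omega) hcon
      omega
    have hydec : ∀ i, j1 ≤ i → i < k → e y (i+1) ≤ e y i := by
      intro i hi hik
      by_contra hcon
      push_neg at hcon
      obtain ⟨r, hr⟩ := riser i y hcon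
      have hry : r ≠ y := by
        intro hcon2
        rw [hcon2] at hr
        omega
      have := hmem_J r i (i+1) hry (by omega) (by omega) hr
      omega
    have hchain : e y k ≤ e y (j1+1) := by
      have key : ∀ t, j1 + 1 + t ≤ k → e y (j1 + 1 + t) ≤ e y (j1+1) := by
        intro t
        induction t with
        | zero => intro _; simp
        | succ s ih =>
          intro hle
          have h1 := hydec (j1 + 1 + s) (by omega) (by omega)
          have h2 := ih (by omega)
          calc e y (j1 + 1 + (s+1)) = e y ((j1 + 1 + s) + 1) := by ring_nf
            _ ≤ e y (j1 + 1 + s) := h1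
            _ ≤ e y (j1 + 1) := h2
      have := key (k - j1 - 1) (by omega)
      rwa [show j1 + 1 + (k - j1 - 1) = k by omega] at this
    have hydrop : e y (j1+1) < e y j1 := by
      by_contra hnd
      push_neg at hnd
      have hz2 : e z (j1+1) ≤ e z j1 := by
        by_contra hzz
        push_neg at hzz
        obtain ⟨r, hr⟩ := riser j1 z hzz
        have hry : r ≠ y := by
          intro hcon2
          rw [hcon2] at hr
          omega
        have := hmem_J r j1 (j1+1) hry (by omega) (by omega) hr
        omega
      have : j1 + 1 ≤ j1 := hmem_J z mz (j1+1) hzy (by omega) (by omega) (by omega)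
      omega
    refine ⟨((univ.erase y).erase z).biUnion (fun p => {fd p, fd p + 1}) ∪ {mz, j1, k},
      ?_, ?_, ?_, ?_⟩
    · have h1 : (((univ.erase y).erase z).biUnion (fun p => {fd p, fd p + 1})).card ≤
          2 * ((univ.erase y).erase z).card := by
        calc _ ≤ ∑ p ∈ (univ.erase y).erase z, ({fd p, fd p + 1} : Finset ℕ).card :=
              Finset.card_biUnion_le
          _ ≤ ∑ _p ∈ (univ.erase y).erase z, 2 := by
              apply Finset.sum_le_sum
              intro p _
              apply le_trans (Finset.card_insert_le _ _)
              simp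
          _ = 2 * ((univ.erase y).erase z).card := by
              rw [Finset.sum_const, smul_eq_mul, mul_comm]
      have h2c : ((univ.erase y).erase z).card = n - 2 := by
        rw [Finset.card_erase_of_mem (Finset.mem_erase.mpr ⟨hzy, Finset.mem_univ z⟩),
          Finset.card_erase_of_mem (Finset.mem_univ y), Finset.card_univ, ZMod.card]
        omega
      have h3 : ({mz, j1, k} : Finset ℕ).card ≤ 3 := by
        apply le_trans (Finset.card_insert_le _ _)
        have := Finset.card_insert_le j1 ({k} : Finset ℕ)
        simp at this ⊢
        omega
      calc _ ≤ _ := Finset.card_union_le _ _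
        _ ≤ 2 * (n - 2) + 3 := by omega
        _ ≤ 2 * n - 1 := by omega
    · apply Finset.mem_union_right
      simp
    · intro x hx
      rcases Finset.mem_union.mp hx with hx | hx
      · obtain ⟨p, hp, hx⟩ := Finset.mem_biUnion.mp hx
        have := hfdk p
        simp only [Finset.mem_insert, Finset.mem_singleton] at hx
        rcases hx with rfl | rfl <;> omega
      · simp only [Finset.mem_insert, Finset.mem_singleton] at hx
        rcases hx with rfl | rfl | rfl <;> omega
    · intro p
      by_cases hpy : p = y
      · subst hpy
        exact ⟨j1, Finset.mem_union_right _ (by simp), k,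
          Finset.mem_union_right _ (by simp), hj1lt, by omega⟩
      · by_cases hpz : p = z
        · subst hpz
          exact ⟨mz, Finset.mem_union_right _ (by simp), j1,
            Finset.mem_union_right _ (by simp), hmzj1, hmzlt⟩
        · have hp : p ∈ (univ.erase y).erase z :=
            Finset.mem_erase.mpr ⟨hpz, Finset.mem_erase.mpr ⟨hpy, Finset.mem_univ p⟩⟩
          exact ⟨fd p, Finset.mem_union_left _ (Finset.mem_biUnion.mpr ⟨p, hp, by simp⟩),
            fd p + 1, Finset.mem_union_left _ (Finset.mem_biUnion.mpr ⟨p, hp, by simp⟩),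
            by omega, hfdlt p⟩

end Combinatorics

/-- every graded monomial identity of `BT(d_1,…,d_m;F)` is a
consequence of the graded monomial identities of `BT(d_1,…,d_m;F)` of degree at most
`2n - 2`. -/
theorem monomial_identities_follow_from_low_degree
    (F : Type*) [Field F] [CharZero F] (n : ℕ) [NeZero n]
    (m : ℕ) (hm : 0 < m) (d : ℕ → ℕ) (hd : ∀ k < m, 0 < d k)
    (hsum : ∑ k ∈ Finset.range m, d k = n)
    (w : List (ZMod n × ℕ))
    (hid : IsGIdentity F n (BTgr F n d) (mono F n w)) :
    mono F n w ∈ TIdealGen F n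
      {f : FA F n | ∃ u : List (ZMod n × ℕ), u.length ≤ 2 * n - 2 ∧
        f = mono F n u ∧ IsGIdentity F n (BTgr F n d) f} := by
  classical
  have hD := stepA (d := d) w hid
  by_cases hn1 : n = 1
  · subst hn1
    obtain ⟨j, hj, hlt⟩ := hD 0
    have heq : ((0 : ZMod 1) + psum (F := F) w (j+1)) = ((0 : ZMod 1) + psum (F := F) w j) :=
      Subsingleton.elim _ _
    rw [heq] at hlt
    exact absurd hlt (lt_irrefl _)
  have hn : 2 ≤ n := by
    have := NeZero.ne n
    omega
  set k := w.length with hkdef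
  have hcons : ∀ i j : ℕ, ∑ p : ZMod n, blockOf d ((p + psum (F := F) w i)).val
      = ∑ p : ZMod n, blockOf d ((p + psum (F := F) w j)).val := by
    have base : ∀ c : ZMod n, ∑ p : ZMod n, blockOf d ((p + c)).val
        = ∑ q : ZMod n, blockOf d q.val := by
      intro c
      exact Fintype.sum_equiv (Equiv.addRight c) _ _ (fun p => rfl)
    intro i j
    rw [base (psum (F := F) w i), base (psum (F := F) w j)]
  obtain ⟨T, hTcard, hkT, hTle, hTcover⟩ := stepC hn k
    (fun p j => blockOf d ((p + psum (F := F) w j)).val) hcons hD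
  have hTne : T.Nonempty := ⟨k, hkT⟩
  set L := T.card - 1 with hLdef
  have hLcard : T.card = L + 1 := by
    have := Finset.card_pos.mpr hTne
    omega
  have hL : L ≤ 2 * n - 2 := by omega
  set tIso := T.orderIsoOfFin hLcard with htIsodef
  set t : ℕ → ℕ := fun i => ((tIso ⟨min i L, by omega⟩ : T) : ℕ) with htdef
  have ht_mem : ∀ i, t i ∈ T := fun i => (tIso ⟨min i L, by omega⟩).2
  have ht_mono : ∀ i i' : ℕ, i ≤ i' → t i ≤ t i' := by
    intro i i' hii
    have hle : (⟨min i L, by omega⟩ : Fin (L+1)) ≤ ⟨min i' L, by omega⟩ := by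
      rw [Fin.le_def]
      simp only
      omega
    exact Subtype.coe_le_coe.mpr (tIso.monotone hle)
  have ht_surj : ∀ a, a ∈ T → ∃ i, i ≤ L ∧ t i = a := by
    intro a ha
    refine ⟨(tIso.symm ⟨a, ha⟩).1, by have := (tIso.symm ⟨a, ha⟩).isLt; omega, ?_⟩
    rw [htdef]
    simp only
    have hmin : (⟨min (tIso.symm ⟨a, ha⟩).1 L, by omega⟩ : Fin (L+1)) = tIso.symm ⟨a, ha⟩ := by
      apply Fin.ext
      simp only
      have := (tIso.symm ⟨a, ha⟩).isLt
      omega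
    rw [hmin, OrderIso.apply_symm_apply]
  have ht_last : t L = k := by
    apply le_antisymm (hTle _ (ht_mem L))
    obtain ⟨i, hiL, hti⟩ := ht_surj k hkT
    calc k = t i := hti.symm
      _ ≤ t L := ht_mono i L hiL
  set deg : ℕ → ZMod n := fun j => psum (F := F) w (t (j+1)) - psum (F := F) w (t j)
    with hdegdef
  set u : List (ZMod n × ℕ) := (List.range L).map (fun j => (deg j, j)) with hudef
  have hulen : u.length = L := by
    rw [hudef, List.length_map, List.length_range]
  have hupsum : ∀ j, j ≤ L → psum (F := F) u j
      = psum (F := F) w (t j) - psum (F := F) w (t 0) := by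
    intro j hj
    induction j with
    | zero => rw [psum_zero, sub_self]
    | succ s ih =>
      have hs := ih (by omega)
      have htake : u.take (s+1) = u.take s ++ [(deg s, s)] := by
        rw [hudef, ← List.map_take, ← List.map_take, List.take_range, List.take_range,
          min_eq_left (by omega : s + 1 ≤ L), min_eq_left (by omega : s ≤ L),
          List.range_succ, List.map_append]
        simp
      have hstep : psum (F := F) u (s+1) = psum (F := F) u s + deg s := by
        rw [psum, psum, htake, List.map_append, List.sum_append]
        simp
      rw [hstep, hs, hdegdef]
      simp only
      ring
  have hch : ∀ x : ZMod n, ∃ j, j < u.length ∧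
      blockOf d ((x + psum (F := F) u (j+1))).val
        < blockOf d ((x + psum (F := F) u j)).val := by
    intro x
    obtain ⟨a, haT, c, hcT, hac, hdrop⟩ := hTcover (x - psum (F := F) w (t 0))
    obtain ⟨i1, hi1, rfl⟩ := ht_surj a haT
    obtain ⟨i2, hi2, rfl⟩ := ht_surj c hcT
    have hi12 : i1 < i2 := by
      by_contra hcon
      push_neg at hcon
      have := ht_mono i2 i1 hcon
      omega
    obtain ⟨j, hji1, hji2, hjd⟩ := exists_adj_desc (fun i =>
      blockOf d (((x - psum (F := F) w (t 0)) + psum (F := F) w (t i))).val) i1 i2 hi12 hdrop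
    refine ⟨j, by rw [hulen]; omega, ?_⟩
    have e1 : x + psum (F := F) u j
        = (x - psum (F := F) w (t 0)) + psum (F := F) w (t j) := by
      rw [hupsum j (by omega)]
      ring
    have e2 : x + psum (F := F) u (j+1)
        = (x - psum (F := F) w (t 0)) + psum (F := F) w (t (j+1)) := by
      rw [hupsum (j+1) (by omega)]
      ring
    rw [e1, e2]
    exact hjd
  have hidu : IsGIdentity F n (BTgr F n d) (mono F n u) := stepB u hch
  have huS : mono F n u ∈ {f : FA F n | ∃ u' : List (ZMod n × ℕ), u'.length ≤ 2 * n - 2 ∧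
      f = mono F n u' ∧ IsGIdentity F n (BTgr F n d) f} :=
    ⟨u, by rw [hulen]; omega, rfl, hidu⟩
  have hmono01 : ∀ j : ℕ, t j ≤ t (j+1) := fun j => ht_mono j (j+1) (by omega)
  have hsegtake : ∀ j : ℕ, w.take (t (j+1))
      = w.take (t j) ++ (w.drop (t j)).take (t (j+1) - t j) := by
    intro j
    conv_lhs => rw [show t (j+1) = t j + (t (j+1) - t j) by have := hmono01 j; omega]
    exact List.take_add (l := w) (i := t j) (j := t (j+1) - t j)
  have hsegdeg : ∀ j : ℕ, (((w.drop (t j)).take (t (j+1) - t j)).map Prod.fst).sum = deg j := by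
    intro j
    have h := congrArg (fun l : List (ZMod n × ℕ) => (l.map Prod.fst).sum) (hsegtake j)
    simp only [List.map_append, List.sum_append] at h
    have h2 : psum (F := F) w (t (j+1)) = psum (F := F) w (t j)
        + (((w.drop (t j)).take (t (j+1) - t j)).map Prod.fst).sum := h
    rw [hdegdef]
    simp only
    rw [h2]
    ring
  set ψ : ZMod n × ℕ → FA F n := fun pr =>
    if pr.2 < L ∧ pr.1 = deg pr.2
    then mono F n ((w.drop (t pr.2)).take (t (pr.2+1) - t pr.2))
    else FreeAlgebra.ι F pr with hψdef
  set φ : FA F n →ₐ[F] FA F n := FreeAlgebra.lift F ψ with hφdef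
  have hφι : ∀ pr : ZMod n × ℕ, φ (FreeAlgebra.ι F pr) = ψ pr := by
    intro pr
    rw [hφdef]
    exact FreeAlgebra.lift_ι_apply _ _
  have hψV : ∀ pr : ZMod n × ℕ, ∃ V, ψ pr = mono F n V ∧ (V.map Prod.fst).sum = pr.1 := by
    intro pr
    rw [hψdef]
    simp only
    by_cases hc : pr.2 < L ∧ pr.1 = deg pr.2
    · refine ⟨(w.drop (t pr.2)).take (t (pr.2+1) - t pr.2), by rw [if_pos hc], ?_⟩
      rw [hsegdeg pr.2]
      exact hc.2.symm
    · refine ⟨[pr], by rw [if_neg hc]; simp [mono], by simp⟩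
  have hφmono : ∀ v : List (ZMod n × ℕ), ∃ V, φ (mono F n v) = mono F n V ∧
      (V.map Prod.fst).sum = (v.map Prod.fst).sum := by
    intro v
    induction v with
    | nil =>
      refine ⟨[], ?_, by simp⟩
      show φ (mono F n []) = mono F n []
      have : mono F n ([] : List (ZMod n × ℕ)) = 1 := by simp [mono]
      rw [this, map_one]
    | cons pr v ih =>
      obtain ⟨V2, hV2, hV2s⟩ := ih
      obtain ⟨V1, hV1, hV1s⟩ := hψV pr
      refine ⟨V1 ++ V2, ?_, ?_⟩
      · rw [mono_cons, map_mul, hV2, hφι, hV1, mono_append]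
      · rw [List.map_append, List.sum_append, hV1s, hV2s]
        simp
  have hφgraded : ∀ g : ZMod n, ∀ x ∈ homComp F n g, φ x ∈ homComp F n g := by
    intro g x hx
    rw [homComp] at hx ⊢
    induction hx using Submodule.span_induction with
    | mem a ha =>
      obtain ⟨v, hv, rfl⟩ := ha
      obtain ⟨V, hV, hVs⟩ := hφmono v
      rw [hV]
      exact Submodule.subset_span ⟨V, by rw [hVs]; exact hv, rfl⟩
    | zero =>
      rw [map_zero]
      exact Submodule.zero_mem _
    | add a b _ _ ha hb =>
      rw [map_add]
      exact Submodule.add_mem _ ha hb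
    | smul c a _ ha =>
      rw [map_smul]
      exact Submodule.smul_mem _ _ ha
  have hφu : φ (mono F n u) = ((List.range L).map
      (fun j => mono F n ((w.drop (t j)).take (t (j+1) - t j)))).prod := by
    rw [hφdef, lift_mono, hudef, List.map_map]
    congr 1
    apply List.map_congr_left
    intro j hj
    have hjL : j < L := List.mem_range.mp hj
    show ψ (deg j, j) = _
    rw [hψdef]
    exact if_pos ⟨hjL, rfl⟩
  have htele : ∀ j, j ≤ L → mono F n (w.take (t j)) = mono F n (w.take (t 0)) *
      ((List.range j).map (fun i => mono F n ((w.drop (t i)).take (t (i+1) - t i)))).prod := by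
    intro j hj
    induction j with
    | zero => simp
    | succ s ih =>
      rw [hsegtake s, mono_append, ih (by omega), List.range_succ, List.map_append,
        List.prod_append]
      simp [mul_assoc]
  have hwdecomp : mono F n w = mono F n (w.take (t 0)) * φ (mono F n u) := by
    have h1 : w.take (t L) = w := by
      rw [ht_last, hkdef]
      exact List.take_length (l := w)
    calc mono F n w = mono F n (w.take (t L)) := by rw [h1]
      _ = _ := by rw [htele L le_rfl, hφu]
  rw [TIdealGen]
  rw [Submodule.mem_sInf]
  intro I hI
  obtain ⟨hTI, hSI⟩ := hI
  have h1 : mono F n u ∈ I := hSI huS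
  have h2 : φ (mono F n u) ∈ I := hTI φ hφgraded _ h1
  rw [hwdecomp]
  exact Ideal.mul_mem_left I _ h2
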